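/- Suppose ω = 0, a·m = 0, λ ≥ 0 is real, and μ > 0. If R : (r₊, ∞) → ℂ is a C² solution of the radial ODE that extends to a C¹ function on [r₊, ∞) and decays exponentially at infinity, then R is identically zero. (Equivalently: a finite-energy real mode solution with μ² > ω² and a·m − 2·M·r₊·ω = 0 must have a·m ≠ 0.) -/

import Mathlib

/-!
With `ω = 0` and `a m = 0` the potential is `V = Δ (λ + μ² r²)`, so `W := Δ R'` satisfies
`W' = (λ + μ² r²) R`. The energy `Re (R̄ W)` then has derivative `Δ |R'|² + (λ + μ² r²) |R|² ≥ 0`,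
so it is monotone. It tends to `0` at `r₊`, where `Δ` vanishes while `R` and `R'` stay bounded,
and at infinity by the exponential decay. Hence it vanishes identically, and so does its
derivative: `R' = 0`, and the constant `R` must be `0`.
-/

open Real Set MeasureTheory Filter Topology ComplexConjugate

/-- The larger root `r₊ = M + √(M² − a²)`. -/
noncomputable def rPlus (M a : ℝ) : ℝ := M + Real.sqrt (M ^ 2 - a ^ 2)

/-- The smaller root `r₋ = M − √(M² − a²)`. -/
noncomputable def rMinus (M a : ℝ) : ℝ := M - Real.sqrt (M ^ 2 - a ^ 2)

/-- `Δ(r) = (r − r₊)(r − r₋)`. -/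
noncomputable def Delta (M a r : ℝ) : ℝ := (r - rPlus M a) * (r - rMinus M a)

/-- The radial potential with real parameters `ω, λ, μ`. -/
noncomputable def Vpot (M a : ℝ) (m : ℤ) (ω lam μ r : ℝ) : ℝ :=
  -(r ^ 2 + a ^ 2) ^ 2 * ω ^ 2 + 4 * M * a * m * r * ω - a ^ 2 * m ^ 2
    + Delta M a r * (lam + a ^ 2 * ω ^ 2 + μ ^ 2 * r ^ 2)

/-- The radial ODE `Δ (Δ R')' − V R = 0` on `(r₊, ∞)`. -/
def RadialODE (M a : ℝ) (m : ℤ) (ω lam μ : ℝ) (R : ℝ → ℂ) : Prop :=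
  ∀ r ∈ Ioi (rPlus M a),
    (Delta M a r : ℂ) * deriv (fun s => (Delta M a s : ℂ) * deriv R s) r
      - (Vpot M a m ω lam μ r : ℂ) * R r = 0

/-- Exponential decay at infinity of `h` together with its derivative. -/
def ExpDecay (rp : ℝ) (h : ℝ → ℂ) : Prop :=
  ∃ C c : ℝ, 0 < C ∧ 0 < c ∧ ∀ r : ℝ, rp + 1 ≤ r →
    ‖h r‖ + ‖deriv h r‖ ≤ C * Real.exp (-c * r)

lemma ExpDecay.tendsto_atTop {r₀ : ℝ} {R : ℝ → ℂ} (hdecay : ExpDecay r₀ R) :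
    Tendsto R atTop (𝓝 0) := by
  obtain ⟨C, c, -, hc, hbound⟩ := hdecay
  have hexp : Tendsto (fun r => C * Real.exp (-c * r)) atTop (𝓝 0) := by
    simpa using (Real.tendsto_exp_atBot.comp
      (tendsto_id.const_mul_atTop_of_neg (neg_neg_of_pos hc))).const_mul C
  refine squeeze_zero_norm' ?_ hexp
  filter_upwards [eventually_ge_atTop (r₀ + 1)] with r hr
  linarith [hbound r hr, norm_nonneg (deriv R r)]

lemma MonotoneOn.eqOn_zero_of_tendsto {f : ℝ → ℝ} {r₀ : ℝ} (hf : MonotoneOn f (Ioi r₀))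
    (hleft : Tendsto f (𝓝[>] r₀) (𝓝 0)) (htop : Tendsto f atTop (𝓝 0)) : EqOn f 0 (Ioi r₀) := by
  intro r hr
  apply le_antisymm
  · refine ge_of_tendsto htop ?_
    filter_upwards [eventually_ge_atTop r] with s hs
    exact hf hr (lt_of_lt_of_le hr hs) hs
  · refine le_of_tendsto hleft ?_
    filter_upwards [Ioo_mem_nhdsGT hr] with s hs
    exact hf hs.1 hr hs.2.le

section Energy

variable {p q : ℝ → ℝ} {R : ℝ → ℂ} {r₀ : ℝ}

noncomputable def energy (p : ℝ → ℝ) (R : ℝ → ℂ) (r : ℝ) : ℝ :=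
  p r * (conj (R r) * deriv R r).re

lemma energy_eq_re (p : ℝ → ℝ) (R : ℝ → ℂ) :
    energy p R = fun r => (conj (R r) * ((p r : ℂ) * deriv R r)).re := by
  ext r
  rw [energy, mul_left_comm, Complex.re_ofReal_mul]

lemma hasDerivAt_energy {r : ℝ} (hR : DifferentiableAt ℝ R r)
    (hW : HasDerivAt (fun s => (p s : ℂ) * deriv R s) (q r * R r) r) :
    HasDerivAt (energy p R) (p r * ‖deriv R r‖ ^ 2 + q r * ‖R r‖ ^ 2) r := by
  have h : HasDerivAt (fun s => (conj (R s) * ((p s : ℂ) * deriv R s)).re)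
      (conj (deriv R r) * (p r * deriv R r) + conj (R r) * (q r * R r)).re r :=
    Complex.reCLM.hasFDerivAt.comp_hasDerivAt r (hR.hasDerivAt.star.mul hW)
  rw [energy_eq_re]
  convert h using 1
  rw [mul_left_comm, Complex.conj_mul', mul_left_comm, Complex.conj_mul']
  norm_cast

lemma tendsto_energy_nhdsGT (hp : Tendsto p (𝓝[>] r₀) (𝓝 0))
    (hR : ContDiffOn ℝ 1 R (Ici r₀)) : Tendsto (energy p R) (𝓝[>] r₀) (𝓝 0) := by
  have hR' : ContinuousWithinAt (derivWithin R (Ici r₀)) (Ici r₀) r₀ :=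
    hR.continuousOn_derivWithin (uniqueDiffOn_Ici r₀) le_rfl r₀ self_mem_Ici
  have hlim : Tendsto (fun r => (conj (R r) * derivWithin R (Ici r₀) r).re) (𝓝[>] r₀)
      (𝓝 (conj (R r₀) * derivWithin R (Ici r₀) r₀).re) :=
    (Complex.continuous_re.continuousAt.comp_continuousWithinAt
      ((hR.continuousOn r₀ self_mem_Ici).star.mul hR')).tendsto.mono_left
      (nhdsWithin_mono r₀ Ioi_subset_Ici_self)
  refine (zero_mul (M₀ := ℝ) _ ▸ hp.mul hlim).congr' ?_
  filter_upwards [self_mem_nhdsWithin] with r hr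
  rw [energy, derivWithin_of_mem_nhds (Ici_mem_nhds hr)]

lemma tendsto_energy_atTop {n : ℕ} (hp : p =O[atTop] fun r => r ^ n) (hdecay : ExpDecay r₀ R) :
    Tendsto (energy p R) atTop (𝓝 0) := by
  obtain ⟨C, c, -, hc, hbound⟩ := hdecay
  have hp_exp : Tendsto (fun r => p r / Real.exp (2 * c * r)) atTop (𝓝 0) :=
    (hp.trans_isLittleO (isLittleO_pow_exp_pos_mul_atTop n (by positivity))).tendsto_div_nhds_zero
  refine (Asymptotics.IsBigO.of_bound (C ^ 2) ?_).trans_tendsto hp_exp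
  filter_upwards [eventually_ge_atTop (r₀ + 1)] with r hr
  have hRr : ‖R r‖ ≤ C * Real.exp (-c * r) := by linarith [hbound r hr, norm_nonneg (deriv R r)]
  have hR'r : ‖deriv R r‖ ≤ C * Real.exp (-c * r) := by linarith [hbound r hr, norm_nonneg (R r)]
  have hexp : Real.exp (-c * r) ^ 2 = (Real.exp (2 * c * r))⁻¹ := by
    rw [← Real.exp_nat_mul, ← Real.exp_neg]; ring_nf
  calc ‖energy p R r‖ ≤ ‖p r‖ * (‖R r‖ * ‖deriv R r‖) := by
        rw [energy, norm_mul]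
        gcongr
        exact (Complex.abs_re_le_norm _).trans (by rw [norm_mul, Complex.norm_conj])
    _ ≤ ‖p r‖ * (C * Real.exp (-c * r)) ^ 2 := by
        gcongr; rw [sq]; exact mul_le_mul hRr hR'r (norm_nonneg _) (hRr.trans' (norm_nonneg _))
    _ = C ^ 2 * ‖p r / Real.exp (2 * c * r)‖ := by
        rw [norm_div, Real.norm_of_nonneg (Real.exp_pos _).le, mul_pow, hexp]; ring

theorem eqOn_zero_of_hasDerivAt_mul_deriv {n : ℕ} (hp : ∀ r ∈ Ioi r₀, 0 < p r)
    (hq : ∀ r ∈ Ioi r₀, 0 ≤ q r)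
    (hW : ∀ r ∈ Ioi r₀, HasDerivAt (fun s => (p s : ℂ) * deriv R s) (q r * R r) r)
    (hp_left : Tendsto p (𝓝[>] r₀) (𝓝 0)) (hp_top : p =O[atTop] fun r => r ^ n)
    (hR : ContDiffOn ℝ 1 R (Ici r₀)) (hdecay : ExpDecay r₀ R) : EqOn R 0 (Ioi r₀) := by
  have hRd : DifferentiableOn ℝ R (Ioi r₀) := fun r hr =>
    ((hR.differentiableOn one_ne_zero r (Ioi_subset_Ici_self hr)).differentiableAt
      (Ici_mem_nhds hr)).differentiableWithinAt
  have hE : ∀ r ∈ Ioi r₀, HasDerivAt (energy p R) (p r * ‖deriv R r‖ ^ 2 + q r * ‖R r‖ ^ 2) r :=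
    fun r hr => hasDerivAt_energy ((hRd r hr).differentiableAt (Ioi_mem_nhds hr)) (hW r hr)
  have hE_nonneg : ∀ r ∈ Ioi r₀, 0 ≤ p r * ‖deriv R r‖ ^ 2 + q r * ‖R r‖ ^ 2 := fun r hr =>
    add_nonneg (mul_nonneg (hp r hr).le (sq_nonneg _)) (mul_nonneg (hq r hr) (sq_nonneg _))
  have hE_mono : MonotoneOn (energy p R) (Ioi r₀) :=
    monotoneOn_of_hasDerivWithinAt_nonneg (convex_Ioi r₀)
      (fun r hr => (hE r hr).continuousAt.continuousWithinAt)
      (fun r hr => (hE r (interior_subset hr)).hasDerivWithinAt)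
      (fun r hr => hE_nonneg r (interior_subset hr))
  have hE_zero : EqOn (energy p R) 0 (Ioi r₀) :=
    hE_mono.eqOn_zero_of_tendsto (tendsto_energy_nhdsGT hp_left hR)
      (tendsto_energy_atTop hp_top hdecay)
  have hR'_zero : EqOn (deriv R) 0 (Ioi r₀) := by
    intro r hr
    have hE0 : HasDerivAt (energy p R) 0 r :=
      (hasDerivAt_const r (0 : ℝ)).congr_of_eventuallyEq
        (eventually_of_mem (Ioi_mem_nhds hr) hE_zero)
    have hsum := (hE r hr).unique hE0
    have hpR' : p r * ‖deriv R r‖ ^ 2 = 0 :=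
      le_antisymm (by nlinarith [mul_nonneg (hq r hr) (sq_nonneg ‖R r‖)])
        (mul_nonneg (hp r hr).le (sq_nonneg _))
    simpa [(hp r hr).ne'] using hpR'
  obtain ⟨k, hk⟩ := isOpen_Ioi.exists_is_const_of_deriv_eq_zero isPreconnected_Ioi hRd hR'_zero
  have hk0 : k = 0 := tendsto_nhds_unique
    (tendsto_const_nhds.congr' (eventually_of_mem (Ioi_mem_atTop r₀) fun r hr => (hk r hr).symm))
    hdecay.tendsto_atTop
  exact fun r hr => (hk r hr).trans hk0

end Energy

section Kerr
variable {M a : ℝ}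

lemma rMinus_le_rPlus : rMinus M a ≤ rPlus M a := by
  unfold rMinus rPlus
  linarith [Real.sqrt_nonneg (M ^ 2 - a ^ 2)]

lemma Delta_pos {r : ℝ} (hr : rPlus M a < r) : 0 < Delta M a r :=
  mul_pos (sub_pos.2 hr) (sub_pos.2 (rMinus_le_rPlus.trans_lt hr))

lemma differentiable_Delta : Differentiable ℝ (Delta M a) := by
  unfold Delta; fun_prop

lemma tendsto_Delta_nhdsGT_rPlus : Tendsto (Delta M a) (𝓝[>] rPlus M a) (𝓝 0) := by
  have h : Tendsto (Delta M a) (𝓝[>] rPlus M a) (𝓝 (Delta M a (rPlus M a))) :=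
    differentiable_Delta.continuous.continuousWithinAt
  rwa [Delta, sub_self, zero_mul] at h

lemma Delta_isBigO_sq : Delta M a =O[atTop] fun r => r ^ 2 := by
  have hlin : ∀ c : ℝ, (fun r => r - c) =O[atTop] fun r => r := fun c =>
    (Asymptotics.isBigO_refl _ _).sub (Asymptotics.isLittleO_const_id_atTop c).isBigO
  show (fun r => (r - rPlus M a) * (r - rMinus M a)) =O[atTop] fun r => r ^ 2
  simpa only [sq] using (hlin (rPlus M a)).mul (hlin (rMinus M a))

lemma Vpot_eq_of_mul_eq_zero {m : ℤ} (ham : a * m = 0) (lam μ r : ℝ) :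
    Vpot M a m 0 lam μ r = Delta M a r * (lam + μ ^ 2 * r ^ 2) := by
  have : a ^ 2 * (m : ℝ) ^ 2 = 0 := by rw [← mul_pow, ham]; ring
  unfold Vpot
  linear_combination -this

lemma RadialODE.hasDerivAt_Delta_mul_deriv {m : ℤ} {lam μ : ℝ} {R : ℝ → ℂ}
    (hODE : RadialODE M a m 0 lam μ R) (ham : a * m = 0)
    (hR : ContDiffOn ℝ 2 R (Ioi (rPlus M a))) {r : ℝ} (hr : rPlus M a < r) :
    HasDerivAt (fun s => (Delta M a s : ℂ) * deriv R s)
      ((lam + μ ^ 2 * r ^ 2 : ℝ) * R r) r := by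
  have hR' : ContDiffOn ℝ 1 (deriv R) (Ioi (rPlus M a)) :=
    hR.deriv_of_isOpen isOpen_Ioi (by norm_num)
  have hR'r : DifferentiableAt ℝ (deriv R) r :=
    (hR'.differentiableOn one_ne_zero r hr).differentiableAt (Ioi_mem_nhds hr)
  have hW : DifferentiableAt ℝ (fun s => (Delta M a s : ℂ) * deriv R s) r := by
    have := differentiable_Delta (M := M) (a := a) r
    fun_prop
  refine hW.hasDerivAt.congr_deriv ?_
  have hΔ : (Delta M a r : ℂ) ≠ 0 := Complex.ofReal_ne_zero.2 (Delta_pos hr).ne'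
  refine mul_left_cancel₀ hΔ ?_
  have h := hODE r hr
  rw [Vpot_eq_of_mul_eq_zero ham] at h
  push_cast at h ⊢
  linear_combination h

end Kerr

theorem stmt1_general (M a : ℝ) (m : ℤ)
    (lam μ : ℝ) (ham : a * m = 0) (hlam : 0 ≤ lam)
    (R : ℝ → ℂ)
    (hC2 : ContDiffOn ℝ 2 R (Ioi (rPlus M a)))
    (hODE : RadialODE M a m 0 lam μ R)
    (hC1 : ContDiffOn ℝ 1 R (Ici (rPlus M a)))
    (hdecay : ExpDecay (rPlus M a) R) :
    ∀ r ∈ Ioi (rPlus M a), R r = 0 :=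
  eqOn_zero_of_hasDerivAt_mul_deriv (q := fun r => lam + μ ^ 2 * r ^ 2)
    (fun _ hr => Delta_pos hr) (fun _ _ => by positivity)
    (fun _ hr => hODE.hasDerivAt_Delta_mul_deriv ham hC2 hr)
    tendsto_Delta_nhdsGT_rPlus Delta_isBigO_sq hC1 hdecay

/-- if `ω = 0`, `a m = 0`, `λ ≥ 0` and `μ > 0`, then any C² solution of the
radial ODE extending C¹ to `[r₊, ∞)` and decaying exponentially at infinity vanishes. -/
theorem stmt1 (M a : ℝ) (hM : 0 < M) (ha : |a| < M) (m : ℤ)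
    (lam μ : ℝ) (ham : a * m = 0) (hlam : 0 ≤ lam) (hμ : 0 < μ)
    (R : ℝ → ℂ)
    (hC2 : ContDiffOn ℝ 2 R (Ioi (rPlus M a)))
    (hODE : RadialODE M a m 0 lam μ R)
    (hC1 : ContDiffOn ℝ 1 R (Ici (rPlus M a)))
    (hdecay : ExpDecay (rPlus M a) R) :
    ∀ r ∈ Ioi (rPlus M a), R r = 0 :=
  stmt1_general M a m lam μ ham hlam R hC2 hODE hC1 hdecay
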